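/- Finite-sample selection bound with minimum separation. Under the hypotheses of the finite-sample selection bound (densities p₀, q₁, …, q_m with q₁ > 0 a.e. on {p₀ > 0}, v_i = d_H(p₀, q_i), s = V(p₀, q₁) ∈ (0, ∞), constants M > 0, 0 < c < 1, t > 0 with d_K(p₀, q₁) ≤ M v₁² and M v₁² + s t < c v_i² for all 2 ≤ i ≤ m), one has P₀^n( ∃ i with 2 ≤ i ≤ m such that ∏_{k=1}^n q₁(X_k) ≤ ∏_{k=1}^n q_i(X_k) ) ≤ 1/(n t² s) + (m − 1) · exp( −(n (1 − c)/2) · min_{2 ≤ i ≤ m} v_i² ). -/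

import Mathlib

/-!
Write `ℓ = log (p₀ / q₁)`; under `P₀` it has mean `d_K(p₀, q₁)` and second moment `s`. By
Chebyshev's inequality the log-likelihood ratio `∑ ℓ (X_k)` exceeds `n (d_K + t s)` with
probability at most `Var ℓ / (n t² s²) ≤ 1 / (n t² s)`. Below that threshold, `q_i` beating
`q₁` forces `∏ √(q_i / p₀) (X_k) ≥ exp (-n (d_K + t s) / 2)`. Since `√(q_i / p₀)` has
`P₀`-mean the Hellinger affinity `1 - d_H²(p₀, q_i) / 2 ≤ exp (-d_H²(p₀, q_i) / 2)`, Markov's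
inequality bounds this by `exp (-n (d_H²(p₀, q_i) - d_K - t s) / 2)`, which the separation
hypothesis turns into `exp (-n (1 - c) d_H²(p₀, q_i) / 2)`. A union bound over `i` finishes.
-/

open MeasureTheory Real

/-- A (probability) density on `(Ω, μ)`: a nonnegative measurable function integrating to 1. -/
def IsDensity {Ω : Type*} [MeasurableSpace Ω] (μ : Measure Ω) (p : Ω → ℝ) : Prop :=
  Measurable p ∧ (∀ x, 0 ≤ p x) ∧ Integrable p μ ∧ ∫ x, p x ∂μ = 1

/-- Squared Hellinger distance `d_H²(p, q) = ∫ (√p − √q)² dμ`. -/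
noncomputable def hellSq {Ω : Type*} [MeasurableSpace Ω] (μ : Measure Ω) (p q : Ω → ℝ) : ℝ :=
  ∫ x, (Real.sqrt (p x) - Real.sqrt (q x)) ^ 2 ∂μ

/-- Kullback–Leibler divergence `d_K(p, q) = ∫ p log(p/q) dμ`. -/
noncomputable def klD {Ω : Type*} [MeasurableSpace Ω] (μ : Measure Ω) (p q : Ω → ℝ) : ℝ :=
  ∫ x, p x * Real.log (p x / q x) ∂μ

/-- Second moment `V(p, q) = ∫ p (log(p/q))² dμ`. -/
noncomputable def klV {Ω : Type*} [MeasurableSpace Ω] (μ : Measure Ω) (p q : Ω → ℝ) : ℝ :=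
  ∫ x, p x * (Real.log (p x / q x)) ^ 2 ∂μ

open ProbabilityTheory

lemma mul_sqrt_div_eq_sqrt_mul_sqrt {x y : ℝ} (hx : 0 ≤ x) : x * √(y / x) = √x * √y := by
  rw [sqrt_div' _ hx, mul_div_left_comm, div_sqrt, mul_comm]

section Density

variable {Ω : Type*} [MeasurableSpace Ω] {μ : Measure Ω} {p q : Ω → ℝ}

lemma IsDensity.measurable (hp : IsDensity μ p) : Measurable p := hp.1

lemma IsDensity.nonneg (hp : IsDensity μ p) (x : Ω) : 0 ≤ p x := hp.2.1 x

lemma IsDensity.integrable (hp : IsDensity μ p) : Integrable p μ := hp.2.2.1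

lemma IsDensity.integral_eq_one (hp : IsDensity μ p) : ∫ x, p x ∂μ = 1 := hp.2.2.2

lemma integral_withDensity_ofReal (hpm : Measurable p) (hp : ∀ x, 0 ≤ p x) (g : Ω → ℝ) :
    ∫ x, g x ∂μ.withDensity (fun x => ENNReal.ofReal (p x)) = ∫ x, p x * g x ∂μ := by
  rw [integral_withDensity_eq_integral_toReal_smul hpm.ennreal_ofReal
    (ae_of_all _ fun _ => ENNReal.ofReal_lt_top)]
  simp_rw [ENNReal.toReal_ofReal (hp _), smul_eq_mul]

lemma integrable_withDensity_ofReal_iff (hpm : Measurable p) (hp : ∀ x, 0 ≤ p x)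
    {g : Ω → ℝ} :
    Integrable g (μ.withDensity fun x => ENNReal.ofReal (p x)) ↔
      Integrable (fun x => p x * g x) μ := by
  rw [integrable_withDensity_iff_integrable_smul' hpm.ennreal_ofReal
    (ae_of_all _ fun _ => ENNReal.ofReal_lt_top)]
  simp_rw [ENNReal.toReal_ofReal (hp _), smul_eq_mul]

lemma ae_pos_withDensity_ofReal (hpm : Measurable p) :
    ∀ᵐ x ∂μ.withDensity (fun x => ENNReal.ofReal (p x)), 0 < p x :=
  (ae_withDensity_iff hpm.ennreal_ofReal).2 <|
    ae_of_all _ fun _ h => ENNReal.ofReal_pos.1 (pos_iff_ne_zero.2 h)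

lemma IsDensity.integrable_sqrt_mul_sqrt (hp : IsDensity μ p) (hq : IsDensity μ q) :
    Integrable (fun x => √(p x) * √(q x)) μ := by
  refine Integrable.mono' ((hp.integrable.add hq.integrable).div_const 2)
    (hp.measurable.sqrt.mul hq.measurable.sqrt).aestronglyMeasurable (ae_of_all _ fun x => ?_)
  rw [Real.norm_of_nonneg (by positivity), Pi.add_apply]
  nlinarith [sq_nonneg (√(p x) - √(q x)), sq_sqrt (hp.nonneg x), sq_sqrt (hq.nonneg x)]

lemma IsDensity.hellSq_eq (hp : IsDensity μ p) (hq : IsDensity μ q) :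
    hellSq μ p q = 2 - 2 * ∫ x, √(p x) * √(q x) ∂μ := by
  have hexpand : ∀ x, (√(p x) - √(q x)) ^ 2 = p x + q x - 2 * (√(p x) * √(q x)) :=
    fun x => by rw [sub_sq, sq_sqrt (hp.nonneg x), sq_sqrt (hq.nonneg x)]; ring
  simp_rw [hellSq, hexpand]
  rw [integral_sub (f := fun x => p x + q x) (hp.integrable.add hq.integrable)
      ((hp.integrable_sqrt_mul_sqrt hq).const_mul 2),
    integral_add hp.integrable hq.integrable, hp.integral_eq_one, hq.integral_eq_one,
    integral_const_mul]
  ring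

lemma IsDensity.integrable_sqrt_div (hp : IsDensity μ p) (hq : IsDensity μ q) :
    Integrable (fun x => √(q x / p x)) (μ.withDensity fun x => ENNReal.ofReal (p x)) := by
  rw [integrable_withDensity_ofReal_iff hp.measurable hp.nonneg]
  simpa only [mul_sqrt_div_eq_sqrt_mul_sqrt (hp.nonneg _)] using hp.integrable_sqrt_mul_sqrt hq

lemma IsDensity.integral_sqrt_div (hp : IsDensity μ p) (hq : IsDensity μ q) :
    ∫ x, √(q x / p x) ∂μ.withDensity (fun x => ENNReal.ofReal (p x))
      = 1 - hellSq μ p q / 2 := by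
  rw [integral_withDensity_ofReal hp.measurable hp.nonneg, hp.hellSq_eq hq]
  simp_rw [mul_sqrt_div_eq_sqrt_mul_sqrt (hp.nonneg _)]
  ring

end Density

lemma exp_neg_half_le_prod_sqrt_div {ι : Type*} [Fintype ι] {p q q' : ι → ℝ} {a : ℝ}
    (hp : ∀ k, 0 < p k) (hq : ∀ k, 0 < q k) (hq' : ∀ k, 0 ≤ q' k)
    (hle : ∏ k, q k ≤ ∏ k, q' k) (hsum : ∑ k, log (p k / q k) ≤ a) :
    exp (-a / 2) ≤ ∏ k, √(q' k / p k) := by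
  have hP : 0 < ∏ k, p k := Finset.prod_pos fun k _ => hp k
  have hQ : 0 < ∏ k, q k := Finset.prod_pos fun k _ => hq k
  have hlog : ∑ k, log (p k / q k) = log ((∏ k, p k) / ∏ k, q k) := by
    rw [← Finset.prod_div_distrib, log_prod fun k _ => (div_pos (hp k) (hq k)).ne']
  calc exp (-a / 2) = √(exp (-a)) := exp_half _
    _ ≤ √((∏ k, q' k) / ∏ k, p k) := by
      refine sqrt_le_sqrt ?_
      calc exp (-a) ≤ exp (-log ((∏ k, p k) / ∏ k, q k)) := exp_le_exp.2 (by linarith)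
        _ = (∏ k, q k) / ∏ k, p k := by rw [exp_neg, exp_log (div_pos hP hQ), inv_div]
        _ ≤ (∏ k, q' k) / ∏ k, p k := by gcongr
    _ = ∏ k, √(q' k / p k) := by
      rw [← Finset.prod_div_distrib, sqrt_prod _ fun k _ => div_nonneg (hq' k) (hp k).le]

section Sample

variable {Ω : Type*} [MeasurableSpace Ω] {ν : Measure Ω} [IsProbabilityMeasure ν]

lemma meas_pi_prod_ge_le_integral_pow_div {ι : Type*} [Fintype ι] {g : Ω → ℝ}
    (hg0 : ∀ x, 0 ≤ g x) (hg : Integrable g ν) {r : ℝ} (hr : 0 < r) :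
    (Measure.pi fun _ : ι => ν) {x | r ≤ ∏ k, g (x k)}
      ≤ ENNReal.ofReal ((∫ x, g x ∂ν) ^ Fintype.card ι / r) := by
  have hmarkov := mul_meas_ge_le_integral_of_nonneg
    (ae_of_all (Measure.pi fun _ : ι => ν) fun x => Finset.prod_nonneg fun k _ => hg0 (x k))
    (Integrable.fintype_prod (f := fun _ => g) fun _ => hg) r
  rw [integral_fintype_prod_eq_pow] at hmarkov
  rw [← ofReal_measureReal]
  exact ENNReal.ofReal_le_ofReal ((le_div_iff₀ hr).2 (by linarith))

lemma meas_pi_prod_le_prod_and_sum_log_div_le {ι : Type*} [Fintype ι] {p q q' : Ω → ℝ}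
    (hq' : ∀ x, 0 ≤ q' x) (hpq : ∀ᵐ x ∂ν, 0 < p x ∧ 0 < q x)
    (hint : Integrable (fun x => √(q' x / p x)) ν) (a : ℝ) :
    (Measure.pi fun _ : ι => ν)
        {x | ∏ k, q (x k) ≤ ∏ k, q' (x k) ∧ ∑ k, log (p (x k) / q (x k)) ≤ a}
      ≤ ENNReal.ofReal ((∫ x, √(q' x / p x) ∂ν) ^ Fintype.card ι / exp (-a / 2)) := by
  have hpos : ∀ᵐ x ∂(Measure.pi fun _ : ι => ν), ∀ k, 0 < p (x k) ∧ 0 < q (x k) :=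
    ae_all_iff.2 fun k => (measurePreserving_eval (fun _ => ν) k).quasiMeasurePreserving.ae hpq
  refine (measure_mono_ae ?_).trans
    (meas_pi_prod_ge_le_integral_pow_div (fun _ => sqrt_nonneg _) hint (exp_pos _))
  filter_upwards [hpos] with x hx ⟨hle, hsum⟩
  exact exp_neg_half_le_prod_sqrt_div (fun k => (hx k).1) (fun k => (hx k).2) (fun k => hq' (x k))
    hle hsum

lemma meas_pi_sum_ge_le_variance_div {f : Ω → ℝ} (hf : MemLp f 2 ν) {n : ℕ} (hn : 0 < n)
    {ε : ℝ} (hε : 0 < ε) :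
    (Measure.pi fun _ : Fin n => ν) {x | n * (ν[f] + ε) ≤ ∑ k, f (x k)}
      ≤ ENNReal.ofReal (Var[f; ν] / (n * ε ^ 2)) := by
  set S : (Fin n → Ω) → ℝ := ∑ k, fun x => f (x k)
  have hS : ∀ x, S x = ∑ k, f (x k) := fun x => Finset.sum_apply _ _ _
  have hmem : ∀ k, MemLp (fun x : Fin n → Ω => f (x k)) 2 (Measure.pi fun _ => ν) := fun k =>
    hf.comp_measurePreserving (measurePreserving_eval _ k)
  have hmean : ∫ x, S x ∂(Measure.pi fun _ => ν) = n * ν[f] := by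
    simp_rw [hS]
    rw [integral_finsetSum _ fun k _ => (hmem k).integrable one_le_two]
    simp [integral_comp_eval (μ := fun _ : Fin n => ν) hf.aestronglyMeasurable]
  have hvar : Var[S; Measure.pi fun _ => ν] = n * Var[f; ν] := by
    simp [S, variance_sum_pi fun _ => hf]
  have hnε : 0 < (n : ℝ) * ε := by positivity
  calc _ ≤ (Measure.pi fun _ : Fin n => ν)
        {x | n * ε ≤ |S x - ∫ y, S y ∂(Measure.pi fun _ => ν)|} :=
        measure_mono fun x (hx : n * (ν[f] + ε) ≤ ∑ k, f (x k)) => by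
          change n * ε ≤ |S x - _|
          rw [hmean, hS, abs_of_nonneg (by linarith)]
          linarith
    _ ≤ ENNReal.ofReal (Var[S; Measure.pi fun _ => ν] / (n * ε) ^ 2) :=
        meas_ge_le_variance_div_sq (memLp_finsetSum' _ fun k _ => hmem k) hnε
    _ = ENNReal.ofReal (Var[f; ν] / (n * ε ^ 2)) := by
        rw [hvar]; congr 1; field_simp

end Sample

section Likelihood

variable {Ω : Type*} [MeasurableSpace Ω] {μ : Measure Ω} {p q q' : Ω → ℝ}

lemma memLp_log_div_withDensity (hp : IsDensity μ p) (hq : Measurable q)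
    (hV : Integrable (fun x => p x * log (p x / q x) ^ 2) μ) :
    MemLp (fun x => log (p x / q x)) 2 (μ.withDensity fun x => ENNReal.ofReal (p x)) :=
  (memLp_two_iff_integrable_sq (hp.measurable.div hq).log.aestronglyMeasurable).2
    ((integrable_withDensity_ofReal_iff hp.measurable hp.nonneg).2 hV)

lemma integral_log_div_withDensity (hp : IsDensity μ p) :
    ∫ x, log (p x / q x) ∂μ.withDensity (fun x => ENNReal.ofReal (p x)) = klD μ p q :=
  integral_withDensity_ofReal hp.measurable hp.nonneg _

lemma variance_log_div_withDensity_le (hp : IsDensity μ p) (hq : Measurable q)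
    [IsProbabilityMeasure (μ.withDensity fun x => ENNReal.ofReal (p x))] :
    Var[fun x => log (p x / q x); μ.withDensity fun x => ENNReal.ofReal (p x)] ≤ klV μ p q :=
  (variance_le_expectation_sq (hp.measurable.div hq).log.aestronglyMeasurable).trans_eq
    (integral_withDensity_ofReal hp.measurable hp.nonneg _)

lemma meas_pi_prod_le_prod_and_sum_log_div_le_exp_hellSq (hp : IsDensity μ p)
    (hq' : IsDensity μ q') (hpq : ∀ᵐ x ∂μ, 0 < p x → 0 < q x)
    [IsProbabilityMeasure (μ.withDensity fun x => ENNReal.ofReal (p x))] (n : ℕ) (a : ℝ) :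
    (Measure.pi fun _ : Fin n => μ.withDensity fun x => ENNReal.ofReal (p x))
        {x | ∏ k, q (x k) ≤ ∏ k, q' (x k) ∧ ∑ k, log (p (x k) / q (x k)) ≤ n * a}
      ≤ ENNReal.ofReal (exp (-(n / 2) * (hellSq μ p q' - a))) := by
  have hpos : ∀ᵐ x ∂μ.withDensity (fun x => ENNReal.ofReal (p x)), 0 < p x ∧ 0 < q x := by
    filter_upwards [ae_pos_withDensity_ofReal hp.measurable,
      (withDensity_absolutelyContinuous μ _).ae_le hpq] with x hpx hqx
    exact ⟨hpx, hqx hpx⟩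
  refine (meas_pi_prod_le_prod_and_sum_log_div_le hq'.nonneg hpos
    (hp.integrable_sqrt_div hq') _).trans (ENNReal.ofReal_le_ofReal ?_)
  have haff : 0 ≤ 1 - hellSq μ p q' / 2 :=
    hp.integral_sqrt_div hq' ▸ integral_nonneg fun _ => sqrt_nonneg _
  rw [hp.integral_sqrt_div hq', Fintype.card_fin]
  calc (1 - hellSq μ p q' / 2) ^ n / exp (-(n * a) / 2)
      ≤ exp (-(hellSq μ p q' / 2)) ^ n / exp (-(n * a) / 2) := by
        gcongr; exact one_sub_le_exp_neg _
    _ = exp (-(n / 2) * (hellSq μ p q' - a)) := by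
        rw [← exp_nat_mul, ← exp_sub]; ring_nf

lemma meas_pi_klD_add_le_sum_log_div_le (hp : IsDensity μ p) (hq : Measurable q)
    (hV : Integrable (fun x => p x * log (p x / q x) ^ 2) μ) (hVpos : 0 < klV μ p q)
    [IsProbabilityMeasure (μ.withDensity fun x => ENNReal.ofReal (p x))]
    {n : ℕ} (hn : 0 < n) {t : ℝ} (ht : 0 < t) :
    (Measure.pi fun _ : Fin n => μ.withDensity fun x => ENNReal.ofReal (p x))
        {x | n * (klD μ p q + t * klV μ p q) ≤ ∑ k, log (p (x k) / q (x k))}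
      ≤ ENNReal.ofReal (1 / (n * t ^ 2 * klV μ p q)) := by
  have hcheb := meas_pi_sum_ge_le_variance_div (memLp_log_div_withDensity hp hq hV) hn
    (mul_pos ht hVpos)
  rw [integral_log_div_withDensity hp] at hcheb
  refine hcheb.trans (ENNReal.ofReal_le_ofReal ?_)
  calc _ ≤ klV μ p q / (n * (t * klV μ p q) ^ 2) := by
        gcongr; exact variance_log_div_withDensity_le hp hq
    _ = 1 / (n * t ^ 2 * klV μ p q) := by field_simp

end Likelihood

theorem cv_selection_bound_min_general {Ω : Type*} [MeasurableSpace Ω]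
    (μ : Measure Ω) (p₀ : Ω → ℝ) (m : ℕ) (hm : 2 ≤ m) (q : ℕ → Ω → ℝ)
    (hp₀ : IsDensity μ p₀)
    (hq : ∀ i ∈ Finset.Icc 1 m, IsDensity μ (q i))
    (hq₁pos : ∀ᵐ x ∂μ, 0 < p₀ x → 0 < q 1 x)
    (hVint : Integrable (fun x => p₀ x * (Real.log (p₀ x / q 1 x)) ^ 2) μ)
    (hVpos : 0 < klV μ p₀ (q 1))
    (M c t : ℝ) (hc1 : c < 1) (ht : 0 < t)
    (hdK : klD μ p₀ (q 1) ≤ M * hellSq μ p₀ (q 1))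
    (hsep : ∀ i ∈ Finset.Icc 2 m,
      M * hellSq μ p₀ (q 1) + klV μ p₀ (q 1) * t < c * hellSq μ p₀ (q i))
    (P₀ : Measure Ω) [IsProbabilityMeasure P₀]
    (hP₀ : P₀ = μ.withDensity fun x => ENNReal.ofReal (p₀ x))
    (n : ℕ) (hn : 0 < n) :
    (Measure.pi fun _ : Fin n => P₀)
        {x : Fin n → Ω |
          ∃ i ∈ Finset.Icc 2 m, ∏ k : Fin n, q 1 (x k) ≤ ∏ k : Fin n, q i (x k)}
      ≤ ENNReal.ofReal (1 / ((n : ℝ) * t ^ 2 * klV μ p₀ (q 1)) +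
          ((m : ℝ) - 1) *
            Real.exp (-((n : ℝ) * (1 - c) / 2) *
              (Finset.Icc 2 m).inf' (Finset.nonempty_Icc.mpr hm)
                (fun i => hellSq μ p₀ (q i)))) := by
  subst hP₀
  have hq₁ := hq 1 (Finset.mem_Icc.2 ⟨le_rfl, by omega⟩)
  set s := klV μ p₀ (q 1)
  set a := klD μ p₀ (q 1) + t * s
  set vmin := (Finset.Icc 2 m).inf' (Finset.nonempty_Icc.mpr hm) fun i => hellSq μ p₀ (q i)
  set E := exp (-((n : ℝ) * (1 - c) / 2) * vmin)
  set ν := Measure.pi fun _ : Fin n => μ.withDensity fun x => ENNReal.ofReal (p₀ x)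
  set B := {x : Fin n → Ω | n * a ≤ ∑ k, log (p₀ (x k) / q 1 (x k))}
  set A := fun i => {x : Fin n → Ω | ∏ k, q 1 (x k) ≤ ∏ k, q i (x k) ∧
    ∑ k, log (p₀ (x k) / q 1 (x k)) ≤ n * a}
  have hB : ν B ≤ ENNReal.ofReal (1 / (n * t ^ 2 * s)) :=
    meas_pi_klD_add_le_sum_log_div_le hp₀ hq₁.measurable hVint hVpos hn ht
  have hA : ∀ i ∈ Finset.Icc 2 m, ν (A i) ≤ ENNReal.ofReal E := by
    intro i hi
    have hqi := hq i (Finset.Icc_subset_Icc_left one_le_two hi)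
    refine (meas_pi_prod_le_prod_and_sum_log_div_le_exp_hellSq hp₀ hqi hq₁pos n a).trans
      (ENNReal.ofReal_le_ofReal (exp_le_exp.2 ?_))
    have hmin : vmin ≤ hellSq μ p₀ (q i) := Finset.inf'_le _ hi
    have hsep_a : a < c * hellSq μ p₀ (q i) := by linarith [hsep i hi]
    have hgap : (1 - c) * vmin ≤ hellSq μ p₀ (q i) - a := by nlinarith
    have := mul_le_mul_of_nonneg_left hgap (by positivity : (0 : ℝ) ≤ n / 2)
    linarith
  calc _ ≤ ν (B ∪ ⋃ i ∈ Finset.Icc 2 m, A i) := by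
        refine measure_mono fun x ⟨i, hi, hle⟩ => ?_
        by_cases hx : x ∈ B
        · exact Or.inl hx
        · exact Or.inr (Set.mem_biUnion hi ⟨hle, (not_le.1 hx).le⟩)
    _ ≤ ν B + ∑ i ∈ Finset.Icc 2 m, ν (A i) :=
        (measure_union_le _ _).trans (by gcongr; exact measure_biUnion_finset_le _ _)
    _ ≤ ENNReal.ofReal (1 / (n * t ^ 2 * s)) + ∑ i ∈ Finset.Icc 2 m, ENNReal.ofReal E :=
        add_le_add hB (Finset.sum_le_sum hA)
    _ = _ := by
        rw [Finset.sum_const, Nat.card_Icc, ← ENNReal.ofReal_nsmul,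
          ← ENNReal.ofReal_add (by positivity) (by positivity), nsmul_eq_mul,
          Nat.cast_sub (by omega)]
        push_cast
        ring_nf

/-- Finite-sample selection bound with minimum separation: the probability that some
competing density `q i` (`2 ≤ i ≤ m`) attains likelihood at least that of `q 1` is at most
`1/(n t² s) + (m−1)·exp(−(n(1−c)/2)·min_{2 ≤ i ≤ m} v_i²)`. -/
theorem cv_selection_bound_min {Ω : Type*} [MeasurableSpace Ω]
    (μ : Measure Ω) [SigmaFinite μ] (p₀ : Ω → ℝ) (m : ℕ) (hm : 2 ≤ m) (q : ℕ → Ω → ℝ)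
    (hp₀ : IsDensity μ p₀)
    (hq : ∀ i ∈ Finset.Icc 1 m, IsDensity μ (q i))
    (hq₁pos : ∀ᵐ x ∂μ, 0 < p₀ x → 0 < q 1 x)
    (hVint : Integrable (fun x => p₀ x * (Real.log (p₀ x / q 1 x)) ^ 2) μ)
    (hVpos : 0 < klV μ p₀ (q 1))
    (M c t : ℝ) (hM : 0 < M) (hc0 : 0 < c) (hc1 : c < 1) (ht : 0 < t)
    (hdK : klD μ p₀ (q 1) ≤ M * hellSq μ p₀ (q 1))
    (hsep : ∀ i ∈ Finset.Icc 2 m,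
      M * hellSq μ p₀ (q 1) + klV μ p₀ (q 1) * t < c * hellSq μ p₀ (q i))
    (P₀ : Measure Ω) [IsProbabilityMeasure P₀]
    (hP₀ : P₀ = μ.withDensity fun x => ENNReal.ofReal (p₀ x))
    (n : ℕ) (hn : 0 < n) :
    (Measure.pi fun _ : Fin n => P₀)
        {x : Fin n → Ω |
          ∃ i ∈ Finset.Icc 2 m, ∏ k : Fin n, q 1 (x k) ≤ ∏ k : Fin n, q i (x k)}
      ≤ ENNReal.ofReal (1 / ((n : ℝ) * t ^ 2 * klV μ p₀ (q 1)) +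
          ((m : ℝ) - 1) *
            Real.exp (-((n : ℝ) * (1 - c) / 2) *
              (Finset.Icc 2 m).inf' (Finset.nonempty_Icc.mpr hm)
                (fun i => hellSq μ p₀ (q i)))) :=
  cv_selection_bound_min_general μ p₀ m hm q hp₀ hq hq₁pos hVint hVpos M c t hc1 ht hdK hsep P₀ hP₀
    n hn
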